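/- Let B be an atomless complete Boolean algebra and G a locally moving subgroup of Aut(B). Then the set Var(B,G) = { var(g) : g ∈ G } is doubly dense in B: for all nonzero a₁, a₂ ∈ B there exists t ∈ Var(B,G) with t ≤ a₁ ∨ a₂, t ∧ a₁ ≠ 0, and t ∧ a₂ ≠ 0. -/
import Mathlib


def fixb {B : Type*} [CompleteBooleanAlgebra B] (g : B ≃o B) : B :=
  sSup {a : B | ∀ b ≤ a, g b = b}

def varb {B : Type*} [CompleteBooleanAlgebra B] (g : B ≃o B) : B :=
  (fixb g)ᶜ

def LocallyMoving {B : Type*} [CompleteBooleanAlgebra B] (G : Subgroup (B ≃o B)) : Prop :=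
  ∀ a : B, a ≠ ⊥ → ∃ g ∈ G, g ≠ 1 ∧ varb g ≤ a

section Aux

variable {B : Type*} [CompleteBooleanAlgebra B]

/-- Everything below `fixb g` is fixed by `g`. -/
lemma fixb_fixes (g : B ≃o B) {b : B} (hb : b ≤ fixb g) : g b = b := by
  set S : Set B := {a : B | ∀ c ≤ a, g c = c} with hS
  have h2 : b = ⨆ a ∈ S, b ⊓ a := by
    rw [← inf_sSup_eq]
    exact (inf_eq_left.2 hb).symm
  calc g b = g (⨆ a ∈ S, b ⊓ a) := by rw [← h2]
    _ = ⨆ a ∈ S, g (b ⊓ a) := by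
        rw [g.map_iSup]; exact iSup_congr fun a => g.map_iSup _
    _ = ⨆ a ∈ S, b ⊓ a := by
        refine iSup_congr fun a => iSup_congr fun ha => ?_
        exact ha _ inf_le_right
    _ = b := h2.symm

lemma le_fixb (g : B ≃o B) {c : B} (h : ∀ b ≤ c, g b = b) : c ≤ fixb g :=
  le_sSup h

lemma oi_map_compl (g : B ≃o B) (x : B) : g xᶜ = (g x)ᶜ := by
  have h1 : g x ⊔ g xᶜ = ⊤ := by rw [← g.map_sup, sup_compl_eq_top, g.map_top]
  have h2 : g x ⊓ g xᶜ = ⊥ := by rw [← g.map_inf, inf_compl_eq_bot, g.map_bot]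
  exact (IsCompl.of_eq h2 h1).compl_eq.symm ▸ rfl

lemma map_varb (g : B ≃o B) : g (varb g) = varb g := by
  have hfix : g (fixb g) = fixb g := fixb_fixes g le_rfl
  rw [varb, oi_map_compl, hfix]

lemma varb_ne_bot (g : B ≃o B) (h : g ≠ 1) : varb g ≠ ⊥ := by
  intro hv
  apply h
  have hfix : fixb g = ⊤ := by
    have : (fixb g)ᶜ = ⊥ := hv
    simpa using congrArg compl this
  exact OrderIso.ext (funext fun b => fixb_fixes g (hfix ▸ le_top))

lemma fixed_of_inf_varb_bot (g : B ≃o B) {b : B} (h : b ⊓ varb g = ⊥) : g b = b := by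
  have hb : b ≤ fixb g := by
    have : b ≤ (varb g)ᶜ := le_compl_iff_disjoint_right.2 (disjoint_iff.2 h)
    simpa [varb] using this
  exact fixb_fixes g hb

/-- If `g` moves `b`, then it moves `b ⊓ varb g`. -/
lemma moves_inf_varb (g : B ≃o B) {b : B} (h : g b ≠ b) :
    g (b ⊓ varb g) ≠ b ⊓ varb g := by
  intro heq
  apply h
  have hdecomp : b = b ⊓ varb g ⊔ b ⊓ fixb g := by
    rw [← inf_sup_left]
    simp [varb]
  calc g b = g (b ⊓ varb g ⊔ b ⊓ fixb g) := by rw [← hdecomp]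
    _ = g (b ⊓ varb g) ⊔ g (b ⊓ fixb g) := g.map_sup _ _
    _ = b ⊓ varb g ⊔ b ⊓ fixb g := by rw [heq, fixb_fixes g inf_le_right]
    _ = b := hdecomp.symm

lemma exists_moved (g : B ≃o B) (h : g ≠ 1) : ∃ b, g b ≠ b := by
  by_contra hb
  push_neg at hb
  exact h (OrderIso.ext (funext hb))

end Aux

/-- `Var(B,G)` is doubly dense: for all nonzero `a₁, a₂` there is `g ∈ G` with
`var g ≤ a₁ ⊔ a₂` meeting both `a₁` and `a₂`. -/
theorem stmt13 {B : Type*} [CompleteBooleanAlgebra B] (hatomless : ∀ x : B, ¬ IsAtom x)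
    (G : Subgroup (B ≃o B)) (hG : LocallyMoving G)
    (a₁ a₂ : B) (h₁ : a₁ ≠ ⊥) (h₂ : a₂ ≠ ⊥) :
    ∃ g ∈ G, varb g ≤ a₁ ⊔ a₂ ∧ varb g ⊓ a₁ ≠ ⊥ ∧ varb g ⊓ a₂ ≠ ⊥ := by
  by_cases hmeet : a₁ ⊓ a₂ = ⊥
  · -- disjoint case: use a product g₁ * g₂
    obtain ⟨g₁, hg₁G, hg₁1, hv₁⟩ := hG a₁ h₁
    obtain ⟨g₂, hg₂G, hg₂1, hv₂⟩ := hG a₂ h₂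
    have h12 : a₁ ≤ a₂ᶜ := le_compl_iff_disjoint_right.2 (disjoint_iff.2 hmeet)
    have h21 : a₂ ≤ a₁ᶜ := le_compl_iff_disjoint_right.2
      (disjoint_iff.2 (by rwa [inf_comm] at hmeet))
    have hfix₁ : a₁ᶜ ≤ fixb g₁ := by
      have : a₁ᶜ ≤ (varb g₁)ᶜ := compl_le_compl hv₁
      simpa [varb] using this
    have hfix₂ : a₂ᶜ ≤ fixb g₂ := by
      have : a₂ᶜ ≤ (varb g₂)ᶜ := compl_le_compl hv₂
      simpa [varb] using this
    refine ⟨g₁ * g₂, mul_mem hg₁G hg₂G, ?_, ?_, ?_⟩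
    · -- varb (g₁ * g₂) ≤ a₁ ⊔ a₂
      have hle : (a₁ ⊔ a₂)ᶜ ≤ fixb (g₁ * g₂) := by
        refine le_fixb _ fun b hb => ?_
        have hb1 : b ≤ a₁ᶜ := hb.trans (by simp)
        have hb2 : b ≤ a₂ᶜ := hb.trans (by simp)
        show g₁ (g₂ b) = b
        rw [fixb_fixes g₂ (hb2.trans hfix₂), fixb_fixes g₁ (hb1.trans hfix₁)]
      calc varb (g₁ * g₂) = (fixb (g₁ * g₂))ᶜ := rfl
        _ ≤ (a₁ ⊔ a₂)ᶜᶜ := compl_le_compl hle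
        _ = a₁ ⊔ a₂ := compl_compl _
    · -- meets a₁
      obtain ⟨b, hb⟩ := exists_moved g₁ hg₁1
      set b₁ := b ⊓ varb g₁ with hb₁def
      have hb₁le : b₁ ≤ a₁ := inf_le_right.trans hv₁
      have hmove : g₁ b₁ ≠ b₁ := moves_inf_varb g₁ hb
      have hmove' : (g₁ * g₂) b₁ ≠ b₁ := by
        have : g₂ b₁ = b₁ := fixb_fixes g₂ ((hb₁le.trans h12).trans hfix₂)
        show g₁ (g₂ b₁) ≠ b₁
        rw [this]; exact hmove
      intro hbot
      have : b₁ ⊓ varb (g₁ * g₂) = ⊥ := by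
        have hle : b₁ ⊓ varb (g₁ * g₂) ≤ varb (g₁ * g₂) ⊓ a₁ :=
          le_inf inf_le_right (inf_le_left.trans hb₁le)
        exact le_bot_iff.1 (hbot ▸ hle)
      exact hmove' (fixed_of_inf_varb_bot _ this)
    · -- meets a₂
      obtain ⟨b, hb⟩ := exists_moved g₂ hg₂1
      set b₂ := b ⊓ varb g₂ with hb₂def
      have hb₂le : b₂ ≤ a₂ := inf_le_right.trans hv₂
      have hmove : g₂ b₂ ≠ b₂ := moves_inf_varb g₂ hb
      have hmove' : (g₁ * g₂) b₂ ≠ b₂ := by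
        have hgb : g₂ b₂ ≤ a₂ := by
          have : g₂ b₂ ≤ g₂ (varb g₂) := g₂.monotone inf_le_right
          rw [map_varb] at this
          exact this.trans hv₂
        show g₁ (g₂ b₂) ≠ b₂
        rw [fixb_fixes g₁ ((hgb.trans h21).trans hfix₁)]
        exact hmove
      intro hbot
      have : b₂ ⊓ varb (g₁ * g₂) = ⊥ := by
        have hle : b₂ ⊓ varb (g₁ * g₂) ≤ varb (g₁ * g₂) ⊓ a₂ :=
          le_inf inf_le_right (inf_le_left.trans hb₂le)
        exact le_bot_iff.1 (hbot ▸ hle)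
      exact hmove' (fixed_of_inf_varb_bot _ this)
  · -- overlapping case
    obtain ⟨g, hgG, hg1, hv⟩ := hG (a₁ ⊓ a₂) hmeet
    have hvne : varb g ≠ ⊥ := varb_ne_bot g hg1
    refine ⟨g, hgG, hv.trans (le_sup_of_le_left inf_le_left), ?_, ?_⟩
    · rwa [inf_eq_left.2 (hv.trans inf_le_left)]
    · rwa [inf_eq_left.2 (hv.trans inf_le_right)]
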